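/- arXiv:math/0203013 — 3 statements merged into one kernel-verified Lean document; each statement's English description precedes it below -/
import Mathlib

section
/- Let A be a finite-dimensional associative unital real (or complex) algebra, and fix α ≠ 0 in the base field. Suppose F is a linear functional such that dim Stab_F(α) is minimal in a neighbourhood of F in A* (with respect to the standard topology). Then for all x ∈ Stab_F(α) and y ∈ Stab_F(1/α), we have xy - α yx = 0. -/
/-!
`Stab_G(α)` is the left kernel of the form `β_G(u, z) = G(uz) - α G(zu)`, which is linear in `G`;
`x ∈ Stab_F(α)` lies in the left and `y ∈ Stab_F(α⁻¹)` in the right kernel of `β_F`. If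
`xy - α yx ≠ 0`, choose `H` with `β_H(x, y) = H(xy - α yx) ≠ 0`. For `ε ≠ 0`, since `β_F(·, y) = 0`,
the left kernel of `β_F + ε β_H` is also the kernel of `u ↦ (β_F(u, ·) + ε β_H(u, ·), β_H(u, y))`,
a family continuous in `ε`. By upper semicontinuity of the kernel dimension it is eventually at most
the dimension at `ε = 0`, that of `Stab_F(α) ∩ ker β_H(·, y)`, a proper subspace of `Stab_F(α)`
since it misses `x`. So `dim Stab_{F + εH}(α) < dim Stab_F(α)` for small `ε ≠ 0`.
-/

open Module

/-- `Stab_F(α)` as a submodule of `A`. -/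
def Stab (k A : Type*) [Field k] [Ring A] [Algebra k A]
    (F : A →ₗ[k] k) (α : k) : Submodule k A where
  carrier := {x : A | ∀ z : A, F (x * z) = α * F (z * x)}
  add_mem' {a b} ha hb := by
    intro z
    simp [add_mul, mul_add, ha z, hb z]
  zero_mem' := by intro z; simp
  smul_mem' c x hx := by
    intro z
    simp [smul_mul_assoc, mul_smul_comm, hx z]
    ring

open Filter Topology

namespace ContinuousLinearMap

variable {𝕜 E F : Type*} [NontriviallyNormedField 𝕜] [CompleteSpace 𝕜]
  [NormedAddCommGroup E] [NormedSpace 𝕜 E] [FiniteDimensional 𝕜 E]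
  [NormedAddCommGroup F] [NormedSpace 𝕜 F]

theorem eventually_finrank_ker_le (f : E →L[𝕜] F) :
    ∀ᶠ g : E →L[𝕜] F in 𝓝 f,
      finrank 𝕜 (LinearMap.ker (g : E →ₗ[𝕜] F)) ≤ finrank 𝕜 (LinearMap.ker (f : E →ₗ[𝕜] F)) := by
  have hrank : ∀ g : E →L[𝕜] F,
      (g : E →ₗ[𝕜] F).rank = finrank 𝕜 (LinearMap.range (g : E →ₗ[𝕜] F)) := fun g =>
    (finrank_eq_rank _ _).symm
  filter_upwards [(isOpen_setOfPred_nat_le_rank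
    (finrank 𝕜 (LinearMap.range (f : E →ₗ[𝕜] F)))).mem_nhds (hrank f).ge] with g hg
  rw [hrank, Nat.cast_le] at hg
  have := (g : E →ₗ[𝕜] F).finrank_range_add_finrank_ker
  have := (f : E →ₗ[𝕜] F).finrank_range_add_finrank_ker
  omega

theorem eventually_finrank_ker_add_smul_lt (B C : E →L[𝕜] F) (ℓ : F →L[𝕜] 𝕜)
    (hℓB : ∀ w, ℓ (B w) = 0) {x : E} (hx : B x = 0) (hCx : ℓ (C x) ≠ 0) :
    ∀ᶠ ε in 𝓝[≠] (0 : 𝕜), finrank 𝕜 (LinearMap.ker ((B + ε • C : E →L[𝕜] F) : E →ₗ[𝕜] F)) <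
      finrank 𝕜 (LinearMap.ker (B : E →ₗ[𝕜] F)) := by
  let Φ : 𝕜 → E →L[𝕜] F × 𝕜 := fun ε => (B + ε • C).prod (ℓ ∘L C)
  have hΦ : Φ = fun ε => Φ 0 + ε • C.prod 0 := by
    ext ε w <;> simp [Φ]
  have hΦcont : Continuous Φ := by
    rw [hΦ]
    exact continuous_const.add (continuous_id.smul continuous_const)
  have hker_lt : LinearMap.ker (Φ 0 : E →ₗ[𝕜] F × 𝕜) < LinearMap.ker (B : E →ₗ[𝕜] F) := by
    refine lt_of_le_of_ne (fun w hw => by simp_all [Φ]) fun h => hCx ?_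
    have hxΦ : x ∈ LinearMap.ker (Φ 0 : E →ₗ[𝕜] F × 𝕜) := h ▸ hx
    simp only [LinearMap.mem_ker, coe_coe, Φ] at hxΦ
    exact congrArg Prod.snd hxΦ
  have hker_le : ∀ ε ≠ (0 : 𝕜), LinearMap.ker ((B + ε • C : E →L[𝕜] F) : E →ₗ[𝕜] F) ≤
      LinearMap.ker (Φ ε : E →ₗ[𝕜] F × 𝕜) := by
    intro ε hε w hw
    have hℓ : ε * ℓ (C w) = 0 := by simpa [hℓB w] using congrArg ℓ hw
    simp_all [Φ]
  filter_upwards [((hΦcont.tendsto 0).mono_left nhdsWithin_le_nhds).eventually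
    (Φ 0).eventually_finrank_ker_le, self_mem_nhdsWithin] with ε hle hε
  calc _ ≤ finrank 𝕜 (LinearMap.ker (Φ ε : E →ₗ[𝕜] F × 𝕜)) :=
        Submodule.finrank_mono (hker_le ε hε)
    _ ≤ finrank 𝕜 (LinearMap.ker (Φ 0 : E →ₗ[𝕜] F × 𝕜)) := hle
    _ < _ := Submodule.finrank_lt_finrank_of_lt hker_lt

end ContinuousLinearMap

section StabForm

variable {𝕜 A : Type*} [NontriviallyNormedField 𝕜] [NormedRing A] [NormedAlgebra 𝕜 A]

noncomputable def stabForm (α : 𝕜) (G : A →L[𝕜] 𝕜) : A →L[𝕜] A →L[𝕜] 𝕜 :=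
  ContinuousLinearMap.compL 𝕜 A A 𝕜 G ∘L
    (ContinuousLinearMap.mul 𝕜 A - α • (ContinuousLinearMap.mul 𝕜 A).flip)

@[simp]
theorem stabForm_apply (α : 𝕜) (G : A →L[𝕜] 𝕜) (u z : A) :
    stabForm α G u z = G (u * z) - α * G (z * u) := by
  simp [stabForm]

theorem stabForm_add_smul (α ε : 𝕜) (G H : A →L[𝕜] 𝕜) :
    stabForm α (G + ε • H) = stabForm α G + ε • stabForm α H := by
  ext u z
  simp
  ring

theorem stab_eq_ker_stabForm (α : 𝕜) (G : A →L[𝕜] 𝕜) :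
    Stab 𝕜 A (G : A →ₗ[𝕜] 𝕜) α = LinearMap.ker (stabForm α G : A →ₗ[𝕜] A →L[𝕜] 𝕜) := by
  ext u
  simp [Stab, ContinuousLinearMap.ext_iff, sub_eq_zero]

theorem stabForm_apply_eq_zero_of_mem_stab_inv {α : 𝕜} (hα : α ≠ 0) {G : A →L[𝕜] 𝕜} {y : A}
    (hy : y ∈ Stab 𝕜 A (G : A →ₗ[𝕜] 𝕜) α⁻¹) (u : A) : stabForm α G u y = 0 := by
  have hyu : G (y * u) = α⁻¹ * G (u * y) := hy u
  rw [stabForm_apply, hyu, mul_inv_cancel_left₀ hα, sub_self]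

end StabForm

/-- If `dim Stab_F(α)` (with `α ≠ 0`) is minimal among continuous functionals in a
neighbourhood of `F` in the dual of a finite-dimensional real or complex algebra, then
`x y - α • (y x) = 0` for all `x ∈ Stab_F(α)` and `y ∈ Stab_F(α⁻¹)`. -/
theorem stmt_16 (𝕜 A : Type*) [RCLike 𝕜] [NormedRing A] [NormedAlgebra 𝕜 A]
    [FiniteDimensional 𝕜 A] (α : 𝕜) (hα : α ≠ 0) (F : A →L[𝕜] 𝕜)
    (hmin : ∀ᶠ (G : A →L[𝕜] 𝕜) in nhds F,
      finrank 𝕜 (Stab 𝕜 A (F : A →ₗ[𝕜] 𝕜) α) ≤ finrank 𝕜 (Stab 𝕜 A (G : A →ₗ[𝕜] 𝕜) α)) :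
    ∀ x ∈ Stab 𝕜 A (F : A →ₗ[𝕜] 𝕜) α, ∀ y ∈ Stab 𝕜 A (F : A →ₗ[𝕜] 𝕜) α⁻¹,
      x * y - α • (y * x) = 0 := by
  intro x hx y hy
  by_contra hv
  obtain ⟨H, hH⟩ := SeparatingDual.exists_ne_zero (R := 𝕜) hv
  have hxker : stabForm α F x = 0 := by
    rwa [stab_eq_ker_stabForm] at hx
  have hCx : ContinuousLinearMap.apply 𝕜 𝕜 y (stabForm α H x) ≠ 0 := by
    simpa using hH
  have hdrop := (stabForm α F).eventually_finrank_ker_add_smul_lt (stabForm α H)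
    (ContinuousLinearMap.apply 𝕜 𝕜 y) (stabForm_apply_eq_zero_of_mem_stab_inv hα hy) hxker hCx
  have hpath : Tendsto (fun ε : 𝕜 => F + ε • H) (𝓝[≠] 0) (𝓝 F) := by
    have hcont : Continuous fun ε : 𝕜 => F + ε • H := by fun_prop
    have := (hcont.tendsto 0).mono_left (nhdsWithin_le_nhds (s := {0}ᶜ))
    rwa [zero_smul 𝕜 H, add_zero] at this
  obtain ⟨ε, hlt, hle⟩ := (hdrop.and (hpath.eventually hmin)).exists
  rw [stab_eq_ker_stabForm, stab_eq_ker_stabForm, stabForm_add_smul] at hle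
  omega
end

section
/- Let A be a finite-dimensional associative unital algebra over ℝ or ℂ, and let F be a linear functional such that dim Stab_F(1) is minimal among functionals in a neighbourhood of F in A*. Then Stab_F(1) is a commutative subalgebra of A. -/
/-!
Write `ω_G(u, z) = G (u z - z u)`, so that `Stab_G(1) = ker ω_G` and
`dim Stab_G(1) = dim A - rank ω_G`. Closure of `Stab_F(1)` under products is associativity alone.
For commutativity fix `μ ∈ A*`: minimality of `dim Stab_F(1)` says `rank (ω_F + t ω_μ) ≤ rank ω_F`
for small `t`. If `ω_μ(x, y) ≠ 0` with `x, y ∈ ker ω_F`, take a complement `W` of `ker ω_F`, on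
which `ω_F` is nondegenerate. The Gram matrix of `ω_F + t ω_μ` on a basis of `W` followed by `x, y`
has determinant `t² d(t)` with `d` continuous and `d(0) = det (ω_F|W) · ω_μ(x, y)² ≠ 0`, so for
small `t ≠ 0` the rank of `ω_F + t ω_μ` is at least `dim W + 2 > rank ω_F`. Hence `μ (x y - y x) = 0`
for every `μ`, i.e. `x y = y x`.
-/

open Module

/-- `Stab_F(1) = {x | ∀ z, F (x z) = F (z x)}` as a submodule of `A`. -/
def Stab1 (k A : Type*) [Field k] [Ring A] [Algebra k A]
    (F : A →ₗ[k] k) : Submodule k A where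
  carrier := {x : A | ∀ z : A, F (x * z) = F (z * x)}
  add_mem' {a b} ha hb := by
    intro z
    simp [add_mul, mul_add, ha z, hb z]
  zero_mem' := by intro z; simp
  smul_mem' c x hx := by
    intro z
    simp [smul_mul_assoc, mul_smul_comm, hx z]

open LinearMap Filter Topology

theorem card_le_finrank_range_of_det_ne_zero {K V W ι : Type*} [Field K] [AddCommGroup V]
    [Module K V] [FiniteDimensional K V] [AddCommGroup W] [Module K W] [Fintype ι] [DecidableEq ι]
    (Φ : V →ₗ[K] W →ₗ[K] K) (v : ι → V) (w : ι → W)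
    (h : (Matrix.of fun i j => Φ (v i) (w j)).det ≠ 0) :
    Fintype.card ι ≤ finrank K (range Φ) := by
  have hrows := Matrix.linearIndependent_rows_of_det_ne_zero h
  have hli : LinearIndependent K fun i => (⟨Φ (v i), mem_range_self Φ (v i)⟩ : range Φ) :=
    .of_comp ((LinearMap.pi fun j => applyₗ (w j)).comp (range Φ).subtype) hrows
  exact hli.fintype_card_le_finrank

theorem LinearMap.IsRefl.separatingLeft_domRestrict₁₂_of_isCompl_ker {K V : Type*} [Field K]
    [AddCommGroup V] [Module K V] {B : V →ₗ[K] V →ₗ[K] K} (hB : B.IsRefl)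
    {W : Submodule K V} (hW : IsCompl W (ker B)) :
    (B.domRestrict₁₂ W W).SeparatingLeft := by
  rintro ⟨x, hxW⟩ hx
  replace hx : ∀ u ∈ W, B x u = 0 := by simpa [Subtype.forall] using! hx
  suffices x ∈ W ⊓ ker B by simpa [hW.inf_eq_bot] using this
  refine ⟨hxW, ext fun y => ?_⟩
  obtain ⟨u, hu, n, hn, rfl⟩ : ∃ u ∈ W, ∃ n ∈ ker B, u + n = y := by
    rw [← Submodule.mem_sup, hW.sup_eq_top]; exact Submodule.mem_top
  simp [hx u hu, hB n x (by simp [mem_ker.mp hn])]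

section Pencil

variable {𝕜 V : Type*} [NontriviallyNormedField 𝕜] [AddCommGroup V] [Module 𝕜 V]

theorem LinearMap.IsAlt.eventually_det_gram_add_smul_ne_zero {B C : V →ₗ[𝕜] V →ₗ[𝕜] 𝕜}
    (hB : B.IsAlt) (hC : C.IsAlt) {W : Submodule 𝕜 V} (hW : IsCompl W (ker B))
    {ι : Type*} [Fintype ι] [DecidableEq ι] (b : Basis ι 𝕜 W)
    {x y : V} (hx : x ∈ ker B) (hy : y ∈ ker B) (hxy : C x y ≠ 0) :
    let v : ι ⊕ Fin 2 → V := Sum.elim (fun i => b i) ![x, y]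
    ∀ᶠ t in 𝓝[≠] (0 : 𝕜), (Matrix.of fun i j => (B + t • C) (v i) (v j)).det ≠ 0 := by
  intro v
  have hv : ∀ i, B (v (.inr i)) = 0 := by
    intro i; fin_cases i
    exacts [hx, hy]
  -- the Gram matrix of `B + t • C` on `v`, with the factor `t` removed from the rows of `x` and `y`
  let R (t : 𝕜) : Matrix (ι ⊕ Fin 2) (ι ⊕ Fin 2) 𝕜 :=
    .of fun i j => Sum.elim (fun _ => B + t • C) (fun _ => C) i (v i) (v j)
  have hgram (t : 𝕜) : Matrix.of (fun i j => (B + t • C) (v i) (v j)) =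
      Matrix.diagonal (Sum.elim 1 fun _ => t) * R t := by
    ext (i | i) j <;> simp [Matrix.diagonal_mul, R, hv]
  have hR0 : R 0 = Matrix.fromBlocks (toMatrix₂ b b (B.domRestrict₁₂ W W)) 0
      (.of fun i j => C (v (.inr i)) (b j)) !![C x x, C x y; C y x, C y y] := by
    ext (i | i) (j | j)
    · simp [R, v, domRestrict₁₂_apply]
    · simpa [R, v] using hB.isRefl (v (.inr j)) (b i) (by rw [hv j, zero_apply])
    · simp [R, v]
    · fin_cases i <;> fin_cases j <;> rfl
  have hR0_ne : (R 0).det ≠ 0 := by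
    have hBW := (separatingLeft_iff_det_ne_zero b).mp
      (hB.isRefl.separatingLeft_domRestrict₁₂_of_isCompl_ker hW)
    rw [hR0, Matrix.det_fromBlocks_zero₁₂, Matrix.det_fin_two_of, hC.self_eq_zero,
      hC.self_eq_zero, ← hC.neg x y]
    simpa using ⟨hBW, hxy⟩
  have hRcont : Continuous fun t => (R t).det := by
    refine Continuous.matrix_det (continuous_matrix fun i j => ?_)
    rcases i with i | i <;>
      simp only [R, Matrix.of_apply, Sum.elim_inl, Sum.elim_inr, add_apply, smul_apply] <;>
      fun_prop
  filter_upwards [nhdsWithin_le_nhds (hRcont.continuousAt.eventually_ne hR0_ne),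
    self_mem_nhdsWithin] with t hRt ht
  rw [hgram, Matrix.det_mul, Matrix.det_diagonal, Fintype.prod_sum_type]
  simpa using ⟨ht, hRt⟩

theorem LinearMap.IsAlt.apply_eq_zero_of_eventually_finrank_range_le [FiniteDimensional 𝕜 V]
    {B C : V →ₗ[𝕜] V →ₗ[𝕜] 𝕜} (hB : B.IsAlt) (hC : C.IsAlt)
    (hrank : ∀ᶠ t in 𝓝 (0 : 𝕜), finrank 𝕜 (range (B + t • C)) ≤ finrank 𝕜 (range B))
    {x y : V} (hx : x ∈ ker B) (hy : y ∈ ker B) : C x y = 0 := by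
  by_contra hxy
  obtain ⟨W, hW⟩ := Submodule.exists_isCompl (ker B)
  obtain ⟨t, hdet, hrank_t⟩ := ((hB.eventually_det_gram_add_smul_ne_zero hC hW.symm
    (Module.finBasis 𝕜 W) hx hy hxy).and (nhdsWithin_le_nhds hrank)).exists
  have hcard := card_le_finrank_range_of_det_ne_zero (B + t • C) _ _ hdet
  have hrankB : finrank 𝕜 (range B) = finrank 𝕜 W := by
    have := finrank_range_add_finrank_ker B
    have := Submodule.finrank_add_eq_of_isCompl hW
    omega
  simp only [Fintype.card_sum, Fintype.card_fin] at hcard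
  omega

end Pencil

section CommutatorForm

variable {R A : Type*} [CommRing R] [Ring A] [Algebra R A]

def commutatorForm (G : A →ₗ[R] R) : A →ₗ[R] A →ₗ[R] R :=
  (LinearMap.mul R A - (LinearMap.mul R A).flip).compr₂ G

@[simp]
theorem commutatorForm_apply (G : A →ₗ[R] R) (u z : A) :
    commutatorForm G u z = G (u * z - z * u) := by
  simp [commutatorForm]

theorem commutatorForm_isAlt (G : A →ₗ[R] R) : (commutatorForm G).IsAlt := fun u => by simp

theorem commutatorForm_add_smul (G H : A →ₗ[R] R) (t : R) :
    commutatorForm (G + t • H) = commutatorForm G + t • commutatorForm H := by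
  ext u z
  simp

end CommutatorForm

namespace Stab1

section Field

variable {k A : Type*} [Field k] [Ring A] [Algebra k A] {F : A →ₗ[k] k}

theorem one_mem : (1 : A) ∈ Stab1 k A F := fun z => by rw [one_mul, mul_one]

theorem mul_mem {x y : A} (hx : x ∈ Stab1 k A F) (hy : y ∈ Stab1 k A F) :
    x * y ∈ Stab1 k A F := fun z =>
  calc F (x * y * z) = F (y * z * x) := by rw [mul_assoc, hx]
    _ = F (z * x * y) := by rw [mul_assoc, hy]
    _ = F (z * (x * y)) := by rw [mul_assoc]

theorem eq_ker_commutatorForm (F : A →ₗ[k] k) : Stab1 k A F = ker (commutatorForm F) := by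
  ext u
  simp [Stab1, LinearMap.ext_iff, sub_eq_zero]

theorem finrank_range_commutatorForm_add_finrank [FiniteDimensional k A] (F : A →ₗ[k] k) :
    finrank k (range (commutatorForm F)) + finrank k (Stab1 k A F) = finrank k A := by
  rw [eq_ker_commutatorForm]
  exact finrank_range_add_finrank_ker _

end Field

theorem mul_comm_of_isLocalMin {𝕜 A : Type*} [RCLike 𝕜] [NormedRing A]
    [NormedAlgebra 𝕜 A] [FiniteDimensional 𝕜 A] {F : A →L[𝕜] 𝕜}
    (hmin : IsLocalMin (fun G : A →L[𝕜] 𝕜 => finrank 𝕜 (Stab1 𝕜 A G)) F)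
    {x y : A} (hx : x ∈ Stab1 𝕜 A F) (hy : y ∈ Stab1 𝕜 A F) : x * y = y * x := by
  rw [← sub_eq_zero, ← Module.forall_dual_apply_eq_zero_iff 𝕜]
  intro μ
  have hline : Tendsto (fun t : 𝕜 => F + t • LinearMap.toContinuousLinearMap μ) (𝓝 0) (𝓝 F) :=
    Continuous.tendsto' (by fun_prop) 0 F (by ext; simp)
  have hrank : ∀ᶠ t in 𝓝 (0 : 𝕜),
      finrank 𝕜 (range (commutatorForm (F : A →ₗ[𝕜] 𝕜) + t • commutatorForm μ)) ≤
        finrank 𝕜 (range (commutatorForm (F : A →ₗ[𝕜] 𝕜))) := by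
    filter_upwards [hline.eventually hmin] with t ht
    have hF := finrank_range_commutatorForm_add_finrank (F : A →ₗ[𝕜] 𝕜)
    have hG := finrank_range_commutatorForm_add_finrank ((F : A →ₗ[𝕜] 𝕜) + t • μ)
    rw [commutatorForm_add_smul] at hG
    rw [ContinuousLinearMap.toLinearMap_add, ContinuousLinearMap.toLinearMap_smul,
      LinearMap.coe_toContinuousLinearMap] at ht
    omega
  rw [eq_ker_commutatorForm] at hx hy
  simpa using (commutatorForm_isAlt _).apply_eq_zero_of_eventually_finrank_range_le
    (commutatorForm_isAlt μ) hrank hx hy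

end Stab1

/-- If `dim Stab_F(1)` is minimal among continuous functionals in a neighbourhood of `F`
in the dual of a finite-dimensional real or complex algebra, then `Stab_F(1)` is a
commutative subalgebra: it contains `1`, is closed under multiplication, and its
elements commute with each other. -/
theorem stmt_17 (𝕜 A : Type*) [RCLike 𝕜] [NormedRing A] [NormedAlgebra 𝕜 A]
    [FiniteDimensional 𝕜 A] (F : A →L[𝕜] 𝕜)
    (hmin : ∀ᶠ (G : A →L[𝕜] 𝕜) in nhds F,
      finrank 𝕜 (Stab1 𝕜 A (F : A →ₗ[𝕜] 𝕜)) ≤ finrank 𝕜 (Stab1 𝕜 A (G : A →ₗ[𝕜] 𝕜))) :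
    (1 : A) ∈ Stab1 𝕜 A (F : A →ₗ[𝕜] 𝕜) ∧
    (∀ x ∈ Stab1 𝕜 A (F : A →ₗ[𝕜] 𝕜), ∀ y ∈ Stab1 𝕜 A (F : A →ₗ[𝕜] 𝕜),
      x * y ∈ Stab1 𝕜 A (F : A →ₗ[𝕜] 𝕜) ∧ x * y = y * x) :=
  ⟨Stab1.one_mem, fun _ hx _ hy => ⟨Stab1.mul_mem hx hy, Stab1.mul_comm_of_isLocalMin hmin hx hy⟩⟩
end

section
/- Let A be a finite-dimensional associative unital algebra over ℝ or ℂ, and let F be a linear functional such that dim Stab_F(0) = dim ker^L_F is minimal in a neighbourhood of F in A*. Then ker^L_F · ker^R_F = {0}, and consequently Nil_F = ker^L_F ∩ ker^R_F is a subalgebra of A with identically zero multiplication. -/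
/-!
Write `B_G (a, b) = G (a * b)`, so that `ker^L_G` is the left kernel of `B_G` and
`dim ker^L_G = dim A - rank B_G`. If `B_F` has rank `r`, there are `w_i, v_j` (`i, j < r`) with
`F (w_i v_j) = δ_ij`. Given `x ∈ ker^L_F`, `y ∈ ker^R_F` and `H` with `H (x y) ≠ 0`, adjoin `x` to
the `w_i` and `y` to the `v_j`: the Gram matrix of `B_{F + tH}` on these families has determinant
`t (H (x y) + O(t))`, so for small `t ≠ 0` the rank of `B_{F + tH}` is at least `r + 1`,
contradicting the minimality of `dim ker^L_F`.
-/

open Module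

/-- `ker^L_F = Stab_F(0) = {x | ∀ z, F (x z) = 0}` as a submodule of `A`. -/
def kerL (k A : Type*) [Field k] [Ring A] [Algebra k A]
    (F : A →ₗ[k] k) : Submodule k A where
  carrier := {x : A | ∀ z : A, F (x * z) = 0}
  add_mem' {a b} ha hb := by
    intro z
    simp [add_mul, ha z, hb z]
  zero_mem' := by intro z; simp
  smul_mem' c x hx := by
    intro z
    simp [smul_mul_assoc, hx z]

/-- `ker^R_F = Stab_F(∞) = {x | ∀ z, F (z x) = 0}` as a submodule of `A`. -/
def kerR (k A : Type*) [Field k] [Ring A] [Algebra k A]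
    (F : A →ₗ[k] k) : Submodule k A where
  carrier := {x : A | ∀ z : A, F (z * x) = 0}
  add_mem' {a b} ha hb := by
    intro z
    simp [mul_add, ha z, hb z]
  zero_mem' := by intro z; simp
  smul_mem' c x hx := by
    intro z
    simp [mul_smul_comm, hx z]


open Filter Topology LinearMap

section Pairing

variable {k V W : Type*} [Field k] [AddCommGroup V] [Module k V] [AddCommGroup W] [Module k W]

def pairingMatrix {ι κ : Type*} (B : V →ₗ[k] W →ₗ[k] k) (w : ι → V) (v : κ → W) :
    Matrix ι κ k :=
  Matrix.of fun i j => B (w i) (v j)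

theorem LinearIndependent.exists_apply_eq_ite {ι : Type*} [Fintype ι] [DecidableEq ι]
    {ψ : ι → Module.Dual k W} (hψ : LinearIndependent k ψ) :
    ∃ v : ι → W, ∀ i j, ψ i (v j) = if i = j then 1 else 0 := by
  have hspan : Submodule.span k (Set.range (pi ψ)) = ⊤ :=
    span_flip_eq_top_iff_linearIndependent.mpr
      (hψ.map' (LinearMap.ltoFun k W k k) (ker_eq_bot.mpr DFunLike.coe_injective))
  have hsurj : Function.Surjective (pi ψ) := by
    rw [← range_eq_top, ← hspan, ← coe_range, Submodule.span_eq]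
  choose v hv using fun j => hsurj (Pi.single j 1)
  refine ⟨v, fun i j => ?_⟩
  simpa [Pi.single_apply, eq_comm] using congrFun (hv j) i

theorem exists_pairingMatrix_eq_one [FiniteDimensional k V] (B : V →ₗ[k] W →ₗ[k] k) :
    ∃ (r : ℕ) (w : Fin r → V) (v : Fin r → W),
      finrank k (ker B) + r = finrank k V ∧ pairingMatrix B w v = 1 := by
  obtain ⟨U, hU⟩ := (ker B).exists_isCompl
  let b := Module.finBasis k U
  have hψ : LinearIndependent k fun i => B (b i) :=
    b.linearIndependent.map' (B.domRestrict U)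
      (ker_eq_bot.mpr (injective_domRestrict_iff.mpr hU.disjoint.symm))
  obtain ⟨v, hv⟩ := hψ.exists_apply_eq_ite
  exact ⟨_, fun i => b i, v, Submodule.finrank_add_eq_of_isCompl hU,
    Matrix.ext fun i j => by simp [pairingMatrix, hv, Matrix.one_apply]⟩

theorem finrank_ker_add_card_le_of_det_pairingMatrix_ne_zero {ι : Type*} [Fintype ι]
    [DecidableEq ι] [FiniteDimensional k V]
    (B : V →ₗ[k] W →ₗ[k] k) (w : ι → V) (v : ι → W) (h : (pairingMatrix B w v).det ≠ 0) :
    finrank k (ker B) + Fintype.card ι ≤ finrank k V := by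
  let φ : V →ₗ[k] ι → k := pi fun j => B.flip (v j)
  have hker : ker B ≤ ker φ := fun a ha => by
    ext j
    simp [φ, mem_ker.mp ha]
  have hsurj : Function.Surjective φ := by
    intro u
    obtain ⟨c, hc⟩ := Matrix.vecMul_surjective_iff_isUnit.mpr
      ((Matrix.isUnit_iff_isUnit_det _).mpr h.isUnit) u
    refine ⟨∑ i, c i • w i, funext fun j => ?_⟩
    simp [φ, ← hc, Matrix.vecMul, dotProduct, pairingMatrix]
  have hrange := (range_eq_top.mpr hsurj ▸ φ.finrank_range_add_finrank_ker)
  rw [finrank_top, Module.finrank_fintype_fun_eq_card] at hrange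
  have := Submodule.finrank_mono hker
  omega

theorem eventually_finrank_ker_add_smul_lt [TopologicalSpace k] [IsTopologicalRing k] [T1Space k]
    [FiniteDimensional k V] (B C : V →ₗ[k] W →ₗ[k] k) {x : V} (hx : x ∈ ker B) {y : W}
    (hy : ∀ a, B a y = 0) (hxy : C x y ≠ 0) :
    ∀ᶠ t in 𝓝[≠] (0 : k), finrank k (B + t • C).ker < finrank k (ker B) := by
  obtain ⟨r, w, v, hr, hwv⟩ := exists_pairingMatrix_eq_one B
  let w' : Fin r ⊕ Unit → V := Sum.elim w fun _ => x
  let v' : Fin r ⊕ Unit → W := Sum.elim v fun _ => y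
  let u : Fin r ⊕ Unit → k := fun j => C x (v' j)
  let K : k → Matrix (Fin r ⊕ Unit) (Fin r ⊕ Unit) k := fun t =>
    (pairingMatrix (B + t • C) w' v').updateRow (.inr ()) u
  have hx' : B x = 0 := hx
  -- Since `B x = 0` the last row of the Gram matrix is `t • u`; with that row replaced by `u`,
  -- the matrix at `t = 0` is block lower triangular with diagonal blocks `1` and `C x y`.
  have hK : ∀ t,
      pairingMatrix (B + t • C) w' v' = (K t).updateRow (.inr ()) (t • K t (.inr ())) := by
    intro t
    ext (i | i) j <;> simp [K, u, w', pairingMatrix, Matrix.updateRow_apply, hx']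
  have hK0 : (K 0).det = C x y := by
    have : K 0 = Matrix.fromBlocks 1 0 (Matrix.of fun _ j => C x (v j))
        (Matrix.of fun _ _ => C x y) := by
      ext (i | i) (j | j) <;>
        simp [K, u, w', v', pairingMatrix, Matrix.updateRow_apply, hy, ← hwv]
    rw [this, Matrix.det_fromBlocks_zero₁₂]
    simp
  have hcont : Continuous fun t => (K t).det := by
    refine Continuous.matrix_det (continuous_pi fun i => continuous_pi fun j => ?_)
    rcases i with i | i <;>
      simp only [K, pairingMatrix, Matrix.updateRow_apply, Matrix.of_apply, LinearMap.add_apply,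
        LinearMap.smul_apply,
        smul_eq_mul, reduceCtorEq, ↓reduceIte] <;>
      fun_prop
  filter_upwards [nhdsWithin_le_nhds (hcont.continuousAt.eventually_ne (hK0 ▸ hxy)),
    self_mem_nhdsWithin] with t hdet (ht : t ≠ 0)
  have := finrank_ker_add_card_le_of_det_pairingMatrix_ne_zero (B + t • C) w' v'
    (by rw [hK, Matrix.det_updateRow_smul, Matrix.updateRow_eq_self]; exact mul_ne_zero ht hdet)
  simp only [Fintype.card_sum, Fintype.card_fin, Fintype.card_unit] at this
  omega

end Pairing

theorem kerL_eq_ker_mul_compr₂ (k A : Type*) [Field k] [Ring A] [Algebra k A]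
    (F : A →ₗ[k] k) : kerL k A F = ker ((LinearMap.mul k A).compr₂ F) := by
  ext x
  simp [kerL, LinearMap.ext_iff]

theorem LinearMap.compr₂_add_smul {R M N P Q : Type*} [CommSemiring R] [AddCommMonoid M]
    [AddCommMonoid N] [AddCommMonoid P] [AddCommMonoid Q] [Module R M] [Module R N] [Module R P]
    [Module R Q] (f : M →ₗ[R] N →ₗ[R] P) (g h : P →ₗ[R] Q) (t : R) :
    f.compr₂ (g + t • h) = f.compr₂ g + t • f.compr₂ h := by
  ext
  simp

/-- If `dim ker^L_F` is minimal among continuous functionals in a neighbourhood of `F` in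
the dual of a finite-dimensional real or complex algebra, then
`ker^L_F · ker^R_F = {0}`; consequently `Nil_F = ker^L_F ∩ ker^R_F` is a subalgebra with
identically zero multiplication. -/
theorem stmt_18 (𝕜 A : Type*) [RCLike 𝕜] [NormedRing A] [NormedAlgebra 𝕜 A]
    [FiniteDimensional 𝕜 A] (F : A →L[𝕜] 𝕜)
    (hmin : ∀ᶠ (G : A →L[𝕜] 𝕜) in nhds F,
      finrank 𝕜 (kerL 𝕜 A (F : A →ₗ[𝕜] 𝕜)) ≤ finrank 𝕜 (kerL 𝕜 A (G : A →ₗ[𝕜] 𝕜))) :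
    (∀ x ∈ kerL 𝕜 A (F : A →ₗ[𝕜] 𝕜), ∀ y ∈ kerR 𝕜 A (F : A →ₗ[𝕜] 𝕜), x * y = 0) ∧
    (∀ x ∈ kerL 𝕜 A (F : A →ₗ[𝕜] 𝕜) ⊓ kerR 𝕜 A (F : A →ₗ[𝕜] 𝕜),
     ∀ y ∈ kerL 𝕜 A (F : A →ₗ[𝕜] 𝕜) ⊓ kerR 𝕜 A (F : A →ₗ[𝕜] 𝕜), x * y = 0) := by
  suffices key : ∀ x ∈ kerL 𝕜 A (F : A →ₗ[𝕜] 𝕜), ∀ y ∈ kerR 𝕜 A (F : A →ₗ[𝕜] 𝕜), x * y = 0 from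
    ⟨key, fun x hx y hy => key x hx.1 y hy.2⟩
  intro x hx y hy
  by_contra hxy
  obtain ⟨H, -, hH⟩ := exists_dual_vector 𝕜 (x * y) (norm_ne_zero_iff.mpr hxy)
  have hline : Tendsto (fun t : 𝕜 => F + t • H) (𝓝[≠] 0) (𝓝 F) := by
    refine tendsto_nhdsWithin_of_tendsto_nhds ?_
    have hcont : Continuous fun t : 𝕜 => F + t • H := by fun_prop
    convert hcont.tendsto 0
    ext
    simp
  have hlt := eventually_finrank_ker_add_smul_lt ((LinearMap.mul 𝕜 A).compr₂ (F : A →ₗ[𝕜] 𝕜))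
    ((LinearMap.mul 𝕜 A).compr₂ (H : A →ₗ[𝕜] 𝕜))
    (kerL_eq_ker_mul_compr₂ 𝕜 A F ▸ hx) hy (by simpa [hH] using hxy)
  obtain ⟨t, hle, hlt⟩ := ((hline.eventually hmin).and hlt).exists
  rw [kerL_eq_ker_mul_compr₂, kerL_eq_ker_mul_compr₂, ContinuousLinearMap.toLinearMap_add,
    ContinuousLinearMap.toLinearMap_smul, compr₂_add_smul] at hle
  omega
end
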